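/- arXiv:1104.0595 — 6 statements merged into one kernel-verified Lean document; each statement's English description precedes it below -/
import Mathlib

section
/- Let F = GF(q) with q an odd prime power and n ≥ 2. The function f : F^n → F defined by f(x_1,...,x_n) = ∏_{i=1}^n (x_i^{q−1} − 1/2) cannot be written as a finite sum of functions each of which depends on at most n−1 of the variables. That is, there do not exist functions g_1,...,g_m : F^n → F, each having at least one inessential variable, with f = g_1 + ⋯ + g_m. -/
/-!
Evaluate a function `h : (ι → R) → R` at the vertices of the cube `{0,1}^ι` and take the
alternating sum `Δ h = ∑_S (-1)^{|S|} h(1_S)`. This is linear in `h`, and it kills every function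
with an inessential variable `i`, since pairing `S` with `S ∪ {i}` cancels the terms. For a product
`∏ j, φ_j (x_j)` it factors as `∏ j, (φ_j 0 - φ_j 1)`, which for `φ t = t^(q-1) - 1/2` is
`(-1)^n ≠ 0`.
-/

open Finset Function

section CubeDiff

variable {ι R : Type*} [Fintype ι] [DecidableEq ι] [CommRing R]

def cubeDiff : ((ι → R) → R) →ₗ[R] R :=
  ∑ S : Finset ι, (-1 : R) ^ #S • LinearMap.proj (S.piecewise (1 : ι → R) 0)

theorem cubeDiff_apply (h : (ι → R) → R) :
    cubeDiff h = ∑ S : Finset ι, (-1) ^ #S * h (S.piecewise 1 0) := by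
  simp [cubeDiff]

theorem cubeDiff_eq_zero_of_update_eq {h : (ι → R) → R} {i : ι}
    (hi : ∀ x a, h (update x i a) = h x) : cubeDiff h = 0 := by
  rw [cubeDiff_apply, ← powerset_univ, ← insert_erase (mem_univ i),
    sum_powerset_insert (notMem_erase i univ), ← sum_add_distrib]
  refine sum_eq_zero fun S hS => ?_
  have hiS : i ∉ S := fun h => notMem_erase i univ (mem_powerset.1 hS h)
  rw [card_insert_of_notMem hiS, piecewise_insert, hi, pow_succ]
  ring

theorem cubeDiff_prod (φ : ι → R → R) :
    cubeDiff (fun x => ∏ j, φ j (x j)) = ∏ j, (φ j 0 - φ j 1) := by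
  simp_rw [sub_eq_neg_add, prod_add, powerset_univ, cubeDiff_apply, prod_neg]
  refine sum_congr rfl fun S _ => ?_
  simp only [piecewise, apply_ite, Pi.one_apply, Pi.zero_apply]
  rw [prod_ite, filter_mem_eq_inter, univ_inter, ← sdiff_eq_filter, mul_assoc]

end CubeDiff

theorem not_sum_of_lower_arity_general
    (F : Type*) [Field F] [Fintype F] (q n : ℕ) (hq : Fintype.card F = q) :
    ¬ ∃ (m : ℕ) (g : Fin m → ((Fin n → F) → F)),
      (∀ k : Fin m, ∃ i : Fin n, ∀ (x : Fin n → F) (a : F),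
        g k (Function.update x i a) = g k x) ∧
      (∀ x : Fin n → F, (∏ i : Fin n, ((x i) ^ (q - 1) - (2 : F)⁻¹)) = ∑ k : Fin m, g k x) := by
  rintro ⟨m, g, hess, hsum⟩
  have hq1 : q - 1 ≠ 0 := by
    have := hq ▸ Fintype.one_lt_card (α := F)
    omega
  have hf : cubeDiff (fun x : Fin n → F => ∏ i, (x i ^ (q - 1) - (2 : F)⁻¹)) = (-1) ^ n := by
    rw [cubeDiff_prod fun _ t => t ^ (q - 1) - (2 : F)⁻¹]
    simp only [zero_pow hq1, one_pow, prod_const, card_univ, Fintype.card_fin]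
    ring
  have hg : cubeDiff (fun x : Fin n → F => ∏ i, (x i ^ (q - 1) - (2 : F)⁻¹)) = 0 := by
    rw [funext hsum, ← sum_fn, map_sum]
    exact sum_eq_zero fun k _ => (hess k).elim fun _ hi => cubeDiff_eq_zero_of_update_eq hi
  exact pow_ne_zero n (neg_ne_zero.2 one_ne_zero) (hf.symm.trans hg)

/-- For `F = GF(q)` with `q` odd and `n ≥ 2`, the function
`f(x) = ∏ (x_i^{q-1} - 1/2)` is not a finite sum of functions each having at least
one inessential variable. -/
theorem not_sum_of_lower_arity
    (F : Type*) [Field F] [Fintype F] (q n : ℕ) (hq : Fintype.card F = q)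
    (hodd : Odd q) (hn : 2 ≤ n) :
    ¬ ∃ (m : ℕ) (g : Fin m → ((Fin n → F) → F)),
      (∀ k : Fin m, ∃ i : Fin n, ∀ (x : Fin n → F) (a : F),
        g k (Function.update x i a) = g k x) ∧
      (∀ x : Fin n → F, (∏ i : Fin n, ((x i) ^ (q - 1) - (2 : F)⁻¹)) = ∑ k : Fin m, g k x) :=
  not_sum_of_lower_arity_general F q n hq
end

section
/- Let F be a field of characteristic 0, n ≥ 3, and f ∈ F[x_1,...,x_n]. Suppose that the restriction of the induced function of f to the set F^n_= = {(a_1,...,a_n) : a_i = a_j for some i ≠ j} is determined by oddsupp, i.e., f(a) = f(b) whenever a, b ∈ F^n_= and oddsupp(a) = oddsupp(b). Then f restricted to F^n_= is constant. -/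
/-!
For a tuple with `aᵢ = aⱼ`, moving the repeated pair together (along `eᵢ + eⱼ`) keeps both the
repeat and the odd support, hence the value of `f`. If a point has `aᵢ = aⱼ = aₖ`, this applies to
all three pairs at every point of the line through it in direction `eᵢ + eⱼ + eₖ`. Along that line
the derivative of `f` in direction `eᵢ + eⱼ + eₖ` is half the sum of those in the three pair
directions, hence vanishes, and in characteristic `0` the restriction of `f` to the line is
constant. Moving the pair to `aₖ`, then all three, then the pair back shows that a third
coordinate can be changed freely once `aᵢ = aⱼ`, so every tuple with a repeated coordinate can be
driven to `0` without changing the value of `f`.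
-/

open MvPolynomial

namespace MvPolynomial

variable {R σ : Type*}

theorem derivative_aeval [CommSemiring R] [Fintype σ] (γ : σ → Polynomial R)
    (f : MvPolynomial σ R) :
    Polynomial.derivative (aeval γ f) =
      ∑ m, aeval γ (pderiv m f) * Polynomial.derivative (γ m) := by
  classical
  induction f using MvPolynomial.induction_on with
  | C a => simp
  | add p q hp hq => simp only [map_add, hp, hq, add_mul, Finset.sum_add_distrib]
  | mul_X p i hp =>
    simp only [map_mul, aeval_X, Polynomial.derivative_mul, hp, Derivation.leibniz, pderiv_X,
      smul_eq_mul, map_add, add_mul, Finset.sum_add_distrib, Finset.sum_mul, Pi.single_apply]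
    simp only [apply_ite (aeval γ), map_one, map_zero, mul_ite, mul_one, mul_zero, ite_mul,
      zero_mul, Finset.sum_ite_eq, Finset.mem_univ, if_true]
    rw [add_comm]
    exact congrArg₂ _ rfl (Finset.sum_congr rfl fun _ _ => by ring)

theorem polynomial_eval_aeval [CommSemiring R] (γ : σ → Polynomial R) (f : MvPolynomial σ R)
    (t : R) : (aeval γ f).eval t = eval (fun m => (γ m).eval t) f := by
  rw [← Polynomial.coe_aeval_eq_eval, ← AlgHom.comp_apply, comp_aeval, ← coe_aeval_eq_eval]
  rfl

noncomputable def paramLine [CommSemiring R] (p v : σ → R) : σ → Polynomial R :=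
  fun m => Polynomial.C (p m) + Polynomial.C (v m) * Polynomial.X

theorem eval_aeval_paramLine [CommSemiring R] (f : MvPolynomial σ R) (p v : σ → R) (t : R) :
    (aeval (paramLine p v) f).eval t = eval (p + t • v) f := by
  rw [polynomial_eval_aeval]
  congr 2 with m
  simp only [paramLine, Polynomial.eval_add, Polynomial.eval_mul, Polynomial.eval_C,
    Polynomial.eval_X, Pi.add_apply, Pi.smul_apply, smul_eq_mul, mul_comm]

noncomputable def dirDeriv [CommSemiring R] [Fintype σ] (f : MvPolynomial σ R) (p v : σ → R) :
    R :=
  v ⬝ᵥ fun m => eval p (pderiv m f)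

section Line

variable [CommRing R] [Fintype σ] {f : MvPolynomial σ R} {p v : σ → R}

theorem eval_derivative_aeval_paramLine (t : R) :
    (Polynomial.derivative (aeval (paramLine p v) f)).eval t = dirDeriv f (p + t • v) v := by
  rw [derivative_aeval, Polynomial.eval_finsetSum, dirDeriv, dotProduct]
  refine Finset.sum_congr rfl fun m _ => ?_
  simp [paramLine, eval_aeval_paramLine, mul_comm (v m)]

theorem dirDeriv_eq_zero_of_eval_add_smul_eq [IsDomain R] [Infinite R]
    (h : ∀ t : R, eval (p + t • v) f = eval p f) : dirDeriv f p v = 0 := by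
  have hconst : aeval (paramLine p v) f = Polynomial.C (eval p f) :=
    Polynomial.funext fun t => by rw [eval_aeval_paramLine, h, Polynomial.eval_C]
  simpa [hconst] using (eval_derivative_aeval_paramLine (f := f) (p := p) (v := v) 0).symm

theorem eval_add_smul_eq_of_dirDeriv_eq_zero [IsDomain R] [CharZero R]
    (h : ∀ t : R, dirDeriv f (p + t • v) v = 0) (t : R) : eval (p + t • v) f = eval p f := by
  have hderiv : Polynomial.derivative (aeval (paramLine p v) f) = 0 :=
    Polynomial.funext fun t => by rw [eval_derivative_aeval_paramLine, h, Polynomial.eval_zero]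
  have hconst := Polynomial.eq_C_of_derivative_eq_zero hderiv
  have := congrArg (Polynomial.eval t) hconst
  have h0 := congrArg (Polynomial.eval 0) hconst
  rw [eval_aeval_paramLine, Polynomial.eval_C] at this h0
  rw [this, ← h0, zero_smul, add_zero]

theorem eval_add_smul_eq_of_pair_sums [IsDomain R] [CharZero R] (u w : σ → R)
    (huv : ∀ t s : R, eval (p + t • (u + v + w) + s • (u + v)) f = eval (p + t • (u + v + w)) f)
    (huw : ∀ t s : R, eval (p + t • (u + v + w) + s • (u + w)) f = eval (p + t • (u + v + w)) f)
    (hvw : ∀ t s : R, eval (p + t • (u + v + w) + s • (v + w)) f = eval (p + t • (u + v + w)) f)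
    (t : R) : eval (p + t • (u + v + w)) f = eval p f := by
  refine eval_add_smul_eq_of_dirDeriv_eq_zero (fun t => ?_) t
  have hsum : (2 : R) * dirDeriv f (p + t • (u + v + w)) (u + v + w) =
      dirDeriv f (p + t • (u + v + w)) (u + v) + dirDeriv f (p + t • (u + v + w)) (u + w) +
        dirDeriv f (p + t • (u + v + w)) (v + w) := by
    simp only [dirDeriv, add_dotProduct]
    ring
  rw [dirDeriv_eq_zero_of_eval_add_smul_eq (huv t), dirDeriv_eq_zero_of_eval_add_smul_eq (huw t),
    dirDeriv_eq_zero_of_eval_add_smul_eq (hvw t), add_zero, add_zero] at hsum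
  exact (mul_eq_zero.1 hsum).resolve_left two_ne_zero

end Line

end MvPolynomial

def HasRepeat {ι F : Type*} (a : ι → F) : Prop :=
  ∃ i j : ι, i ≠ j ∧ a i = a j

section Oddsupp

variable {ι F : Type*} [Fintype ι] [DecidableEq F]

/-- `oddsupp a = oddsupp b`. -/
def SameOddsupp (a b : ι → F) : Prop :=
  ∀ c : F, (Finset.univ.filter (fun i => a i = c)).card % 2
    = (Finset.univ.filter (fun i => b i = c)).card % 2

def DeterminedByOddsupp [CommSemiring F] (f : MvPolynomial ι F) : Prop :=
  ∀ a b : ι → F, HasRepeat a → HasRepeat b → SameOddsupp a b → eval a f = eval b f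

variable [DecidableEq ι]

theorem sameOddsupp_of_agree_off_pair {a b : ι → F} {i j : ι} (hij : i ≠ j)
    (ha : a i = a j) (hb : b i = b j) (hab : ∀ k, k ≠ i → k ≠ j → a k = b k) :
    SameOddsupp a b := by
  intro c
  -- the equal pair contributes `0` or `2` to each count
  have hcount : ∀ x : ι → F, (Finset.univ.filter (fun k => x k = c)).card =
      (if x i = c then 1 else 0) + (if x j = c then 1 else 0) +
        ∑ k ∈ (Finset.univ.erase i).erase j, if x k = c then 1 else 0 := by
    intro x
    rw [Finset.card_filter, ← Finset.add_sum_erase _ _ (Finset.mem_univ i),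
      ← Finset.add_sum_erase _ _ (Finset.mem_erase.2 ⟨hij.symm, Finset.mem_univ j⟩), add_assoc]
  have hrest : ∑ k ∈ (Finset.univ.erase i).erase j, (if a k = c then 1 else 0) =
      ∑ k ∈ (Finset.univ.erase i).erase j, if b k = c then 1 else 0 :=
    Finset.sum_congr rfl fun k hk => by
      simp only [Finset.mem_erase] at hk
      rw [hab k hk.2.1 hk.1]
  rw [hcount a, hcount b, hrest, ha, hb]
  split_ifs <;> omega

namespace DeterminedByOddsupp

variable [CommRing F] {f : MvPolynomial ι F}

theorem eval_add_smul_pair (hf : DeterminedByOddsupp f) {q : ι → F} {i j : ι} (hij : i ≠ j)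
    (hq : q i = q j) (s : F) :
    eval (q + s • (Pi.single i 1 + Pi.single j 1)) f = eval q f := by
  set r : ι → F := q + s • (Pi.single i 1 + Pi.single j 1) with hr
  have hri : r i = r j := by simp [hr, hij, hij.symm, hq]
  refine hf _ _ ⟨i, j, hij, hri⟩ ⟨i, j, hij, hq⟩
    (sameOddsupp_of_agree_off_pair hij hri hq fun k hki hkj => ?_)
  simp [hr, hki, hkj]

theorem eval_add_smul_triple [IsDomain F] [CharZero F] (hf : DeterminedByOddsupp f) {q : ι → F}
    {i j k : ι} (hij : i ≠ j) (hik : i ≠ k) (hjk : j ≠ k) (hqij : q i = q j) (hqjk : q j = q k)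
    (t : F) : eval (q + t • (Pi.single i 1 + Pi.single j 1 + Pi.single k 1)) f = eval q f := by
  refine eval_add_smul_eq_of_pair_sums _ _ (fun t s => ?_) (fun t s => ?_) (fun t s => ?_) t
  · exact hf.eval_add_smul_pair hij (by simp [hij, hij.symm, hik, hjk, hqij]) s
  · exact hf.eval_add_smul_pair hik (by simp [hij, hik, hik.symm, hjk.symm, hqij, hqjk]) s
  · exact hf.eval_add_smul_pair hjk (by simp [hij.symm, hik.symm, hjk, hjk.symm, hqjk]) s

theorem eval_update [IsDomain F] [CharZero F] (hf : DeterminedByOddsupp f) {a : ι → F}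
    {i j k : ι} (hij : i ≠ j) (hki : k ≠ i) (hkj : k ≠ j) (ha : a i = a j) (z : F) :
    eval (Function.update a k z) f = eval a f := by
  set b : ι → F := a + (a k - a i) • (Pi.single i 1 + Pi.single j 1) with hb
  set c : ι → F := b + (z - a k) • (Pi.single i 1 + Pi.single j 1 + Pi.single k 1) with hc
  have hbij : b i = b j := by simp [hb, hij, hij.symm, ha]
  have hbjk : b j = b k := by simp [hb, hij.symm, hki, hkj, ← ha]
  have hcij : c i = c j := by simp [hc, hbij, hij, hij.symm, hki.symm, hkj.symm]
  have hupdate : Function.update a k z = c + (a i - z) • (Pi.single i 1 + Pi.single j 1) := by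
    ext m
    by_cases hmk : m = k
    · subst hmk
      simp [hc, hb, hki, hkj]
    · by_cases hmi : m = i
      · subst hmi
        simp [hc, hb, hij, hki.symm]
      · by_cases hmj : m = j
        · subst hmj
          simp [hc, hb, hij.symm, hkj.symm, ha]
        · simp [hc, hb, hmi, hmj, hmk]
  calc eval (Function.update a k z) f = eval c f := by rw [hupdate, hf.eval_add_smul_pair hij hcij]
    _ = eval b f := hf.eval_add_smul_triple hij hki.symm hkj.symm hbij hbjk _
    _ = eval a f := hf.eval_add_smul_pair hij ha _

theorem eval_piecewise_zero [IsDomain F] [CharZero F] (hf : DeterminedByOddsupp f) {b : ι → F}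
    {i j : ι} (hij : i ≠ j) (hi : b i = 0) (hj : b j = 0) (S : Finset ι) :
    eval (S.piecewise 0 b) f = eval b f := by
  induction S using Finset.induction_on with
  | empty => rw [Finset.piecewise_empty]
  | insert k S _ ih =>
    rw [Finset.piecewise_insert, Pi.zero_apply]
    have hpi : S.piecewise (0 : ι → F) b i = 0 := by by_cases h : i ∈ S <;> simp [h, hi]
    have hpj : S.piecewise (0 : ι → F) b j = 0 := by by_cases h : j ∈ S <;> simp [h, hj]
    rcases eq_or_ne k i with rfl | hki
    · rwa [Function.update_eq_self_iff.2 hpi.symm]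
    rcases eq_or_ne k j with rfl | hkj
    · rwa [Function.update_eq_self_iff.2 hpj.symm]
    rw [hf.eval_update hij hki hkj (hpi.trans hpj.symm), ih]

theorem eval_eq_eval_zero [IsDomain F] [CharZero F] (hf : DeterminedByOddsupp f) {a : ι → F}
    (ha : HasRepeat a) : eval a f = eval 0 f := by
  obtain ⟨i, j, hij, haij⟩ := ha
  set b : ι → F := a + (-a i) • (Pi.single i 1 + Pi.single j 1) with hb
  have hbi : b i = 0 := by simp [hb, hij]
  have hbj : b j = 0 := by simp [hb, hij.symm, haij]
  calc eval a f = eval b f := (hf.eval_add_smul_pair hij haij _).symm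
    _ = eval (Finset.univ.piecewise 0 b) f := (hf.eval_piecewise_zero hij hbi hbj _).symm
    _ = eval 0 f := by rw [Finset.piecewise_univ]

end DeterminedByOddsupp

end Oddsupp

theorem constant_on_diagonal_of_oddsupp_general
    (F : Type*) [Field F] [CharZero F] [DecidableEq F] (n : ℕ)
    (f : MvPolynomial (Fin n) F)
    (hodd : ∀ a b : Fin n → F,
      (∃ i j : Fin n, i ≠ j ∧ a i = a j) → (∃ i j : Fin n, i ≠ j ∧ b i = b j) →
      (∀ c : F, (Finset.univ.filter (fun i => a i = c)).card % 2
              = (Finset.univ.filter (fun i => b i = c)).card % 2) →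
      eval a f = eval b f) :
    ∀ a b : Fin n → F,
      (∃ i j : Fin n, i ≠ j ∧ a i = a j) → (∃ i j : Fin n, i ≠ j ∧ b i = b j) →
      eval a f = eval b f := by
  intro a b ha hb
  rw [DeterminedByOddsupp.eval_eq_eval_zero hodd ha,
    DeterminedByOddsupp.eval_eq_eval_zero hodd hb]

/-- Over a field of characteristic 0, if the restriction of a polynomial
function to the set of tuples with a repeated coordinate is determined by `oddsupp`,
then that restriction is constant. -/
theorem constant_on_diagonal_of_oddsupp
    (F : Type*) [Field F] [CharZero F] [DecidableEq F] (n : ℕ) (hn : 3 ≤ n)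
    (f : MvPolynomial (Fin n) F)
    (hodd : ∀ a b : Fin n → F,
      (∃ i j : Fin n, i ≠ j ∧ a i = a j) → (∃ i j : Fin n, i ≠ j ∧ b i = b j) →
      (∀ c : F, (Finset.univ.filter (fun i => a i = c)).card % 2
              = (Finset.univ.filter (fun i => b i = c)).card % 2) →
      eval a f = eval b f) :
    ∀ a b : Fin n → F,
      (∃ i j : Fin n, i ≠ j ∧ a i = a j) → (∃ i j : Fin n, i ≠ j ∧ b i = b j) →
      eval a f = eval b f :=
  constant_on_diagonal_of_oddsupp_general F n f hodd
end

section
/- Let F = GF(q) with q a power of 2, and let f ∈ F[x_1,...,x_n] be a polynomial in which every variable has exponent at most q−1 in every monomial. Suppose (A) f is symmetric (the coefficient of x_1^{k_1}⋯x_n^{k_n} is invariant under permuting the exponent vector), and (B) the coefficient of x_1^{k_1}⋯x_n^{k_n} is 0 whenever k_i = k_j ≠ 0 for some i ≠ j. Then the polynomial obtained from f by substituting x_2 := x_1 does not contain the variable x_1. -/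
/-!
Write `τ` for the transposition of the first two variables. Once `x₂ = x₁`, the monomial terms
`c_d x^d` and `c_{τd} x^{τd}` of `f` are equal, since `c_{τd} = c_d` by symmetry; so in
characteristic `2` all terms with `τd ≠ d` cancel in pairs. A term with `τd = d` has `d₁ = d₂`,
hence `d₁ = d₂ = 0` by (B) unless its coefficient vanishes, so what survives does not involve
`x₁` at all.
-/

open MvPolynomial Finset

theorem FiniteField.charP_two_of_card_eq_two_pow {F : Type*} [Field F] [Fintype F] {k : ℕ}
    (h : Fintype.card F = 2 ^ k) : CharP F 2 := by
  obtain ⟨n, hp, hcard⟩ := FiniteField.card F (ringChar F)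
  have hdvd : ringChar F ∣ 2 ^ k := h ▸ hcard ▸ dvd_pow_self _ n.ne_zero
  exact ringChar.of_eq ((Nat.prime_dvd_prime_iff_eq hp Nat.prime_two).1 (hp.dvd_of_dvd_pow hdvd))

theorem Finset.sum_eq_sum_filter_fixed_of_charTwo {ι R : Type*} [DecidableEq ι] [Semiring R]
    [CharP R 2] {s : Finset ι} {g : ι → ι} {f : ι → R} (g_mem : ∀ a ∈ s, g a ∈ s)
    (hgg : ∀ a ∈ s, g (g a) = a) (hf : ∀ a ∈ s, f (g a) = f a) :
    ∑ a ∈ s, f a = ∑ a ∈ s with g a = a, f a := by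
  have hcancel : ∑ a ∈ s with g a ≠ a, f a = 0 := by
    refine sum_involution (fun a _ => g a) (fun a ha => ?_) (fun a ha _ => (mem_filter.1 ha).2)
      (fun a ha => ?_) (fun a ha => hgg a (mem_filter.1 ha).1)
    · rw [hf a (mem_filter.1 ha).1, CharTwo.add_self_eq_zero]
    · obtain ⟨has, hga⟩ := mem_filter.1 ha
      exact mem_filter.2 ⟨g_mem a has, fun h => hga ((hgg a has).symm.trans h).symm⟩
  rw [← sum_filter_add_sum_filter_not s (fun a => g a = a), hcancel, add_zero]

theorem Finsupp.equivMapDomain_swap_eq_self_iff {ι M : Type*} [DecidableEq ι] [Zero M]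
    {d : ι →₀ M} {i j : ι} : equivMapDomain (Equiv.swap i j) d = d ↔ d i = d j := by
  refine ⟨fun h => ?_, fun h => ?_⟩
  · simpa [equivMapDomain_apply] using DFunLike.congr_fun h j
  · ext k
    rw [equivMapDomain_apply, Equiv.symm_swap, Equiv.swap_apply_def]
    split_ifs with hki hkj
    · rw [hki, h]
    · rw [hkj, h]
    · rfl

namespace MvPolynomial

variable {σ R : Type*} [CommSemiring R] {f : MvPolynomial σ R} {i j : σ}

theorem coeff_equivMapDomain_of_rename_eq {e : σ ≃ σ} (hf : rename e f = f) (d : σ →₀ ℕ) :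
    coeff (d.equivMapDomain e) f = coeff d f := by
  rw [Finsupp.equivMapDomain_eq_mapDomain, ← coeff_rename_mapDomain e e.injective f d, hf]

variable [DecidableEq σ]

theorem eval_eq_sum_filter_of_rename_swap_eq [CharP R 2] (hf : rename (Equiv.swap i j) f = f)
    {x : σ → R} (hx : x i = x j) :
    eval x f = ∑ d ∈ f.support with d i = d j, coeff d f * d.prod fun k e => x k ^ e := by
  have hx_swap : ∀ k, x (Equiv.swap i j k) = x k := fun k => by
    rw [Equiv.swap_apply_def]; split_ifs <;> simp_all
  rw [eval_eq, ← filter_congr fun d _ => Finsupp.equivMapDomain_swap_eq_self_iff]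
  refine sum_eq_sum_filter_fixed_of_charTwo (g := Finsupp.equivMapDomain (Equiv.swap i j))
    (fun d hd => ?_) (fun d _ => by ext k; simp [Finsupp.equivMapDomain_apply]) (fun d _ => ?_)
  · rw [mem_support_iff, coeff_equivMapDomain_of_rename_eq hf]
    exact mem_support_iff.1 hd
  · rw [coeff_equivMapDomain_of_rename_eq hf]
    change _ * (d.equivMapDomain _).prod (fun k e => x k ^ e) = _ * d.prod fun k e => x k ^ e
    simp only [Finsupp.prod_equivMapDomain, hx_swap]

theorem eval_eq_of_rename_swap_eq [CharP R 2] (hf : rename (Equiv.swap i j) f = f)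
    (hB : ∀ d ∈ f.support, d i = d j → d i = 0) {x y : σ → R} (hx : x i = x j) (hy : y i = y j)
    (hxy : ∀ k, k ≠ i → k ≠ j → x k = y k) : eval x f = eval y f := by
  rw [eval_eq_sum_filter_of_rename_swap_eq hf hx, eval_eq_sum_filter_of_rename_swap_eq hf hy]
  refine sum_congr rfl fun d hd => ?_
  obtain ⟨hd, hdij⟩ := mem_filter.1 hd
  have hdi : d i = 0 := hB d hd hdij
  refine congrArg _ (Finsupp.prod_congr fun k hk => ?_)
  have hki : k ≠ i := by rintro rfl; exact Finsupp.mem_support_iff.1 hk hdi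
  have hkj : k ≠ j := by rintro rfl; exact Finsupp.mem_support_iff.1 hk (hdij ▸ hdi)
  rw [hxy k hki hkj]

end MvPolynomial

theorem minor_independent_of_symmetric_char2_general
    (F : Type*) [Field F] [Fintype F] (q n : ℕ) (hq : Fintype.card F = q)
    (hq2 : ∃ k : ℕ, 0 < k ∧ q = 2 ^ k) (hn : 2 ≤ n)
    (f : MvPolynomial (Fin n) F)
    (hsymm : f.IsSymmetric)
    (hB : ∀ d ∈ f.support, ∀ i j : Fin n, i ≠ j → d i = d j → d i = 0) :
    ∀ (x : Fin n → F) (a b : F),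
      eval (fun k : Fin n => if (k : ℕ) = 0 ∨ (k : ℕ) = 1 then a else x k) f =
      eval (fun k : Fin n => if (k : ℕ) = 0 ∨ (k : ℕ) = 1 then b else x k) f := by
  intro x a b
  obtain ⟨k, -, hk⟩ := hq2
  have : CharP F 2 := FiniteField.charP_two_of_card_eq_two_pow (hq.trans hk)
  let i₀ : Fin n := ⟨0, by omega⟩
  let i₁ : Fin n := ⟨1, by omega⟩
  refine eval_eq_of_rename_swap_eq (i := i₀) (j := i₁) (hsymm _)
    (fun d hd => hB d hd i₀ i₁ (by simp [i₀, i₁, Fin.ext_iff])) (by simp [i₀, i₁])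
    (by simp [i₀, i₁]) fun k hk₀ hk₁ => ?_
  have hk : ¬((k : ℕ) = 0 ∨ (k : ℕ) = 1) := by
    simpa [i₀, i₁, Fin.ext_iff] using And.intro hk₀ hk₁
  simp only [hk, if_false]

/-- Over `F = GF(q)` with `q` a power of `2`, if `f` has all exponents
at most `q - 1`, is symmetric, and every monomial with two equal nonzero exponents has
coefficient `0`, then identifying the second variable with the first yields a function
not depending on the identified variable. -/
theorem minor_independent_of_symmetric_char2
    (F : Type*) [Field F] [Fintype F] (q n : ℕ) (hq : Fintype.card F = q)
    (hq2 : ∃ k : ℕ, 0 < k ∧ q = 2 ^ k) (hn : 2 ≤ n)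
    (f : MvPolynomial (Fin n) F)
    (hdeg : ∀ d ∈ f.support, ∀ i : Fin n, d i ≤ q - 1)
    (hsymm : f.IsSymmetric)
    (hB : ∀ d ∈ f.support, ∀ i j : Fin n, i ≠ j → d i = d j → d i = 0) :
    ∀ (x : Fin n → F) (a b : F),
      eval (fun k : Fin n => if (k : ℕ) = 0 ∨ (k : ℕ) = 1 then a else x k) f =
      eval (fun k : Fin n => if (k : ℕ) = 0 ∨ (k : ℕ) = 1 then b else x k) f :=
  minor_independent_of_symmetric_char2_general F q n hq hq2 hn f hsymm hB
end

section
/- Let F = GF(q) with q a power of 2, and let f ∈ F[x_1,...,x_n] satisfy conditions (A) and (B): f is symmetric in the sense that its coefficients are invariant under permutations of the exponent vector, and the coefficient of any monomial with two equal nonzero exponents is 0. Then the induced polynomial function f : F^n → F is determined by oddsupp: f(a) = f(b) whenever oddsupp(a) = oddsupp(b). -/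
/-!
If `a i = a j` and we are in characteristic 2, the monomials of `f` with `(d i, d j) ≠ (0, 0)`
cancel in pairs under the transposition of `i` and `j`: symmetry gives the partner the same
coefficient and the same value at `a`, and by (B) the partner is a different monomial. So `f a`
only sees the monomials not involving `x i, x j`, and the common value of `a i = a j` may be
replaced by any `t`. Moving equal pairs to a fixed value `c₀` turns `a` into a tuple in which
every `c ≠ c₀` occurs at most once, i.e. exactly when `c ∈ oddsupp a`; two such tuples with the
same `oddsupp` are permutations of each other, and symmetry finishes the proof.
-/

open MvPolynomial Finset
open Function (update update_of_ne apply_update)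

namespace MvPolynomial

variable {R σ : Type*}

theorem IsSymmetric.coeff_mapDomain [CommSemiring R] {f : MvPolynomial σ R} (hf : f.IsSymmetric)
    (e : Equiv.Perm σ) (d : σ →₀ ℕ) : coeff (d.mapDomain e) f = coeff d f := by
  have h := coeff_rename_mapDomain e e.injective f d
  rwa [hf e] at h

theorem IsSymmetric.eval_comp_perm [CommSemiring R] {f : MvPolynomial σ R} (hf : f.IsSymmetric)
    (x : σ → R) (e : Equiv.Perm σ) : eval (x ∘ e) f = eval x f := by
  rw [← eval_rename, hf e]

variable [CommRing R] [CharP R 2] [Fintype σ] [DecidableEq σ]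

theorem sum_support_filter_not_eq_zero {f : MvPolynomial σ R} (hf : f.IsSymmetric)
    (hB : ∀ d ∈ f.support, ∀ i j : σ, i ≠ j → d i = d j → d i = 0)
    {a : σ → R} {i j : σ} (hij : i ≠ j) (ha : a i = a j) :
    ∑ d ∈ f.support with ¬(d i = 0 ∧ d j = 0), coeff d f * ∏ k, a k ^ d k = 0 := by
  set τ := Equiv.swap i j
  have hτ : ∀ d : σ →₀ ℕ, ∀ k, d.mapDomain τ k = d (τ k) := fun d k => by
    rw [Finsupp.mapDomain_equiv_apply, Equiv.symm_swap]
  have ha_τ : ∀ k, a (τ k) = a k := fun k => by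
    rcases eq_or_ne k i with rfl | hki
    · rw [Equiv.swap_apply_left, ha]
    rcases eq_or_ne k j with rfl | hkj
    · rw [Equiv.swap_apply_right, ha]
    · rw [Equiv.swap_apply_of_ne_of_ne hki hkj]
  have hmonomial (d : σ →₀ ℕ) : ∏ k, a k ^ d.mapDomain τ k = ∏ k, a k ^ d k :=
    calc ∏ k, a k ^ d.mapDomain τ k = ∏ k, a (τ k) ^ d (τ k) := by simp_rw [hτ, ha_τ]
      _ = ∏ k, a k ^ d k := Equiv.prod_comp τ fun k => a k ^ d k
  refine sum_involution (fun d _ => d.mapDomain τ) (fun d _ => ?_) (fun d hd _ => ?_)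
    (fun d hd => ?_) (fun d _ => ?_)
  · rw [hf.coeff_mapDomain, hmonomial, CharTwo.add_self_eq_zero]
  · rw [mem_filter] at hd
    -- by (B), `d i ≠ d j`, so the swap has no fixed points
    have hdij : d i ≠ d j := fun h => hd.2 ⟨hB d hd.1 i j hij h, h ▸ hB d hd.1 i j hij h⟩
    intro hfix
    apply hdij
    rw [← DFunLike.congr_fun hfix i, hτ, Equiv.swap_apply_left]
  · rw [mem_filter, mem_support_iff] at hd ⊢
    rw [hf.coeff_mapDomain, hτ, hτ, Equiv.swap_apply_left, Equiv.swap_apply_right]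
    exact ⟨hd.1, fun h => hd.2 h.symm⟩
  · ext k
    rw [hτ, hτ, Equiv.swap_apply_self]

theorem eval_eq_sum_support_filter {f : MvPolynomial σ R} (hf : f.IsSymmetric)
    (hB : ∀ d ∈ f.support, ∀ i j : σ, i ≠ j → d i = d j → d i = 0)
    {a : σ → R} {i j : σ} (hij : i ≠ j) (ha : a i = a j) :
    eval a f = ∑ d ∈ f.support with d i = 0 ∧ d j = 0, coeff d f * ∏ k, a k ^ d k := by
  rw [eval_eq', ← sum_filter_add_sum_filter_not f.support (fun d => d i = 0 ∧ d j = 0),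
    sum_support_filter_not_eq_zero hf hB hij ha, add_zero]

theorem eval_update_update_of_eq {f : MvPolynomial σ R} (hf : f.IsSymmetric)
    (hB : ∀ d ∈ f.support, ∀ i j : σ, i ≠ j → d i = d j → d i = 0)
    {a : σ → R} {i j : σ} (hij : i ≠ j) (ha : a i = a j) (t : R) :
    eval (update (update a i t) j t) f = eval a f := by
  have ht : update (update a i t) j t i = update (update a i t) j t j := by simp [hij]
  rw [eval_eq_sum_support_filter hf hB hij ht, eval_eq_sum_support_filter hf hB hij ha]
  refine sum_congr rfl fun d hd => congrArg _ (prod_congr rfl fun k _ => ?_)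
  rw [mem_filter] at hd
  rcases eq_or_ne k i with rfl | hki
  · rw [hd.2.1, pow_zero, pow_zero]
  rcases eq_or_ne k j with rfl | hkj
  · rw [hd.2.2, pow_zero, pow_zero]
  rw [update_of_ne hkj, update_of_ne hki]

end MvPolynomial

section FiberCard

variable {ι α : Type*} [Fintype ι] [DecidableEq α]

theorem card_filter_update_add [DecidableEq ι] (a : ι → α) (i : ι) (t c : α) :
    #{k | update a i t k = c} + (if a i = c then 1 else 0)
      = #{k | a k = c} + if t = c then 1 else 0 := by
  simp only [card_filter, apply_update (fun _ y => if y = c then 1 else 0) a i t,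
    sum_update_of_mem (mem_univ i), sum_eq_add_sum_sdiff_singleton_of_mem (mem_univ i)]
  ring

theorem card_filter_update_update_add [DecidableEq ι] (a : ι → α) {i j : ι} (hij : i ≠ j)
    (t c : α) :
    #{k | update (update a i t) j t k = c} + (if a i = c then 1 else 0)
      + (if a j = c then 1 else 0) = #{k | a k = c} + 2 * if t = c then 1 else 0 := by
  have hi := card_filter_update_add a i t c
  have hj := card_filter_update_add (update a i t) j t c
  rw [update_of_ne hij.symm] at hj
  omega

theorem exists_perm_eq_comp_of_card_fiber_eq {a b : ι → α}
    (h : ∀ c, #{i | a i = c} = #{i | b i = c}) : ∃ σ : Equiv.Perm ι, a = b ∘ σ :=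
  ⟨Equiv.ofFiberEquiv fun c => Fintype.equivOfCardEq (by simpa [Fintype.card_subtype] using h c),
    funext fun k => (Equiv.ofFiberEquiv_map _ k).symm⟩

theorem card_fiber_eq_of_forall_ne {a b : ι → α} {c₀ : α}
    (h : ∀ c ≠ c₀, #{i | a i = c} = #{i | b i = c}) (c : α) :
    #{i | a i = c} = #{i | b i = c} := by
  rcases ne_or_eq c c₀ with hc | rfl
  · exact h c hc
  set T := univ.image a ∪ univ.image b ∪ {c}
  have hcard : ∀ x : ι → α, (∀ k, x k ∈ T) →
      Fintype.card ι = #{i | x i = c} + ∑ d ∈ T \ {c}, #{i | x i = d} := fun x hx => by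
    rw [← card_univ, card_eq_sum_card_fiberwise fun k _ => hx k,
      sum_eq_add_sum_sdiff_singleton_of_mem (show c ∈ T by simp [T])]
  have ha := hcard a (by simp [T])
  have hb := hcard b (by simp [T])
  rw [sum_congr rfl fun d hd => h d (by simpa using (mem_sdiff.1 hd).2)] at ha
  omega

end FiberCard

section PairInvariant

variable {ι α β : Type*} [Fintype ι] [DecidableEq ι] [DecidableEq α] {g : (ι → α) → β}

theorem exists_card_fiber_le_one_of_update_update
    (hpair : ∀ (a : ι → α) (i j : ι) (t : α), i ≠ j → a i = a j →
      g (update (update a i t) j t) = g a)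
    (c₀ : α) (a : ι → α) :
    ∃ a' : ι → α, g a' = g a ∧ (∀ c, #{i | a' i = c} % 2 = #{i | a i = c} % 2) ∧
      ∀ c ≠ c₀, #{i | a' i = c} ≤ 1 := by
  induction hN : Fintype.card ι - #{i | a i = c₀} using Nat.strong_induction_on generalizing a
    with | _ N ih =>
  by_cases hred : ∀ c ≠ c₀, #{i | a i = c} ≤ 1
  · exact ⟨a, rfl, fun _ => rfl, hred⟩
  push Not at hred
  obtain ⟨c, hc, hlt⟩ := hred
  obtain ⟨i, hi, j, hj, hij⟩ := one_lt_card.1 hlt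
  rw [mem_filter] at hi hj
  have hcount := card_filter_update_update_add a hij c₀
  rw [hi.2, hj.2] at hcount
  have hdecr : Fintype.card ι - #{k | update (update a i c₀) j c₀ k = c₀} < N := by
    have hle : #{k | update (update a i c₀) j c₀ k = c₀} ≤ Fintype.card ι :=
      card_filter_le _ _
    have := hcount c₀
    rw [if_neg hc, if_pos rfl] at this
    omega
  obtain ⟨b, hb, hpar, hred⟩ := ih _ hdecr (update (update a i c₀) j c₀) rfl
  refine ⟨b, hb.trans (hpair a i j c₀ hij (hi.2.trans hj.2.symm)), fun x => (hpar x).trans ?_,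
    hred⟩
  have := hcount x
  split_ifs at this <;> omega

theorem eq_of_card_fiber_mod_two_eq
    (hperm : ∀ (a : ι → α) (σ : Equiv.Perm ι), g (a ∘ σ) = g a)
    (hpair : ∀ (a : ι → α) (i j : ι) (t : α), i ≠ j → a i = a j →
      g (update (update a i t) j t) = g a)
    {a b : ι → α} (h : ∀ c, #{i | a i = c} % 2 = #{i | b i = c} % 2) : g a = g b := by
  rcases isEmpty_or_nonempty ι with hι | ⟨⟨i₀⟩⟩
  · exact congrArg g (Subsingleton.elim a b)
  obtain ⟨a', ha, hpa, hra⟩ := exists_card_fiber_le_one_of_update_update hpair (a i₀) a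
  obtain ⟨b', hb, hpb, hrb⟩ := exists_card_fiber_le_one_of_update_update hpair (a i₀) b
  have hfiber : ∀ c ≠ a i₀, #{i | a' i = c} = #{i | b' i = c} := fun c hc => by
    have := h c; have := hpa c; have := hpb c; have := hra c hc; have := hrb c hc
    omega
  obtain ⟨σ, hσ⟩ := exists_perm_eq_comp_of_card_fiber_eq (card_fiber_eq_of_forall_ne hfiber)
  rw [← ha, ← hb, hσ, hperm]

end PairInvariant

/-- Over `F = GF(q)` with `q` a power of `2`, a polynomial satisfying
conditions (A) (symmetry) and (B) (monomials with two equal nonzero exponents vanish)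
induces a function determined by `oddsupp`. -/
theorem determined_by_oddsupp_of_symmetric_char2
    (F : Type*) [Field F] [Fintype F] [DecidableEq F] (q n : ℕ) (hq : Fintype.card F = q)
    (hq2 : ∃ k : ℕ, 0 < k ∧ q = 2 ^ k)
    (f : MvPolynomial (Fin n) F)
    (hsymm : f.IsSymmetric)
    (hB : ∀ d ∈ f.support, ∀ i j : Fin n, i ≠ j → d i = d j → d i = 0) :
    ∀ a b : Fin n → F,
      (∀ c : F, (Finset.univ.filter (fun i => a i = c)).card % 2
              = (Finset.univ.filter (fun i => b i = c)).card % 2) →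
      eval a f = eval b f := by
  obtain ⟨k, -, rfl⟩ := hq2
  have : CharP F 2 := charP_of_card_eq_prime_pow hq
  intro a b hab
  exact eq_of_card_fiber_mod_two_eq (g := fun x => eval x f) hsymm.eval_comp_perm
    (fun x i j t hij hx => eval_update_update_of_eq hsymm hB hij hx t) hab
end

section
/- Let A be a finite set with k ≥ 2 elements, identified with {0,1,...,k−1}, and let 2 ≤ n ≤ k. Define f : A^n → A by f(a) = 1 if a = (0, 1, ..., n−1) and f(a) = 0 otherwise. Then all n variables of f are essential, every identification minor f_{i←j} (i ≠ j) is identically 0, and hence the arity gap of f equals n. -/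
/-- An essential variable of a function of several variables. -/
def Essential {A B : Type*} {n : ℕ} (g : (Fin n → A) → B) (i : Fin n) : Prop :=
  ∃ (x : Fin n → A) (a : A), g (Function.update x i a) ≠ g x

/-- The essential arity: the number of essential variables. -/
noncomputable def essArity {A B : Type*} {n : ℕ} (g : (Fin n → A) → B) : ℕ :=
  Nat.card {i : Fin n // Essential g i}

/-- The identification minor `f_{i ← j}`, substituting `x_j` for `x_i`. -/
def idMinor {A B : Type*} {n : ℕ} (f : (Fin n → A) → B) (i j : Fin n) : (Fin n → A) → B :=
  fun x => f (Function.update x i (x j))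

/-- The arity gap of a function. -/
noncomputable def arityGap {A B : Type*} {n : ℕ} (f : (Fin n → A) → B) : ℕ :=
  sInf {d | ∃ i j : Fin n, i ≠ j ∧ Essential f i ∧ Essential f j ∧
    d = essArity f - essArity (idMinor f i j)}


/-!
Changing one coordinate of the tuple `(0, 1, …, n-1)` changes the value of `f`, so every
variable is essential. An identification minor `f_{i←j}` only evaluates `f` at tuples with a
repeated coordinate, so it is the constant `0`; hence the essential arity drops from `n` to `0`
whichever pair is identified.
-/

section Essential

variable {A B : Type*} {n : ℕ}

theorem essArity_eq_of_forall_essential {g : (Fin n → A) → B} (h : ∀ i, Essential g i) :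
    essArity g = n := by
  rw [essArity, Nat.card_congr (Equiv.subtypeUnivEquiv h), Nat.card_eq_fintype_card,
    Fintype.card_fin]

theorem not_essential_of_forall_eq {g : (Fin n → A) → B} {c : B} (h : ∀ x, g x = c)
    (i : Fin n) : ¬Essential g i :=
  fun ⟨x, a, hne⟩ => hne (by rw [h, h])

theorem essArity_eq_zero_of_forall_eq {g : (Fin n → A) → B} {c : B} (h : ∀ x, g x = c) :
    essArity g = 0 := by
  have : IsEmpty {i : Fin n // Essential g i} :=
    ⟨fun ⟨i, hi⟩ => not_essential_of_forall_eq h i hi⟩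
  exact Nat.card_of_isEmpty

theorem arityGap_eq_of_forall {f : (Fin n → A) → B} {d : ℕ} (hn : 2 ≤ n)
    (hess : ∀ i, Essential f i)
    (h : ∀ i j, i ≠ j → essArity f - essArity (idMinor f i j) = d) : arityGap f = d := by
  have hpair : (⟨0, by omega⟩ : Fin n) ≠ ⟨1, by omega⟩ := by simp [Fin.ext_iff]
  have hset : {d' | ∃ i j : Fin n, i ≠ j ∧ Essential f i ∧ Essential f j ∧
      d' = essArity f - essArity (idMinor f i j)} = {d} := by
    refine Set.eq_singleton_iff_unique_mem.mpr ⟨?_, ?_⟩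
    · exact ⟨_, _, hpair, hess _, hess _, (h _ _ hpair).symm⟩
    · rintro _ ⟨i, j, hij, -, -, rfl⟩
      exact h i j hij
  rw [arityGap, hset, csInf_singleton]

end Essential

theorem not_injective_update_apply {A : Type*} {n : ℕ} {i j : Fin n} (hij : i ≠ j)
    (x : Fin n → A) : ¬Function.Injective (Function.update x i (x j)) := fun hinj =>
  hij (hinj (by rw [Function.update_self, Function.update_of_ne hij.symm]))

section Indicator

variable {A B : Type*} [DecidableEq A] {n : ℕ} {p : Fin n → A} {b c : B}

theorem essential_ite_eq [Nontrivial A] (hbc : b ≠ c) (i : Fin n) :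
    Essential (fun x => if x = p then b else c) i := by
  obtain ⟨a, ha⟩ := exists_ne (p i)
  have hupd : Function.update p i a ≠ p := fun h => ha (by simpa using congr_fun h i)
  exact ⟨p, a, by simpa [hupd] using hbc.symm⟩

theorem idMinor_ite_eq (hp : Function.Injective p) (i j : Fin n) (hij : i ≠ j)
    (x : Fin n → A) : idMinor (fun x => if x = p then b else c) i j x = c :=
  if_neg fun h : Function.update x i (x j) = p =>
    not_injective_update_apply hij x (h ▸ hp)

end Indicator

/-- On `A = {0,…,k−1}` with `2 ≤ n ≤ k`, the indicator function of the
tuple `(0,1,…,n−1)` has all variables essential, all identification minors identically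
`0`, and arity gap `n`. -/
theorem arityGap_indicator (k n : ℕ) (hn : 2 ≤ n) (hnk : n ≤ k)
    (f : (Fin n → Fin k) → Fin k)
    (hf : ∀ a : Fin n → Fin k,
      f a = if (∀ i : Fin n, (a i : ℕ) = (i : ℕ)) then
              (⟨1, by omega⟩ : Fin k) else ⟨0, by omega⟩) :
    (∀ i : Fin n, Essential f i) ∧
    (∀ i j : Fin n, i ≠ j → ∀ x, idMinor f i j x = ⟨0, by omega⟩) ∧
    arityGap f = n := by
  have : Nontrivial (Fin k) := Fin.nontrivial_iff_two_le.mpr (hn.trans hnk)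
  obtain rfl : f = fun a => if a = Fin.castLE hnk then ⟨1, by omega⟩ else ⟨0, by omega⟩ := by
    funext a
    simp [hf, funext_iff, Fin.ext_iff]
  have h10 : (⟨1, by omega⟩ : Fin k) ≠ ⟨0, by omega⟩ := by simp [Fin.ext_iff]
  have hess := essential_ite_eq (p := Fin.castLE hnk) h10
  have hminor := idMinor_ite_eq (b := (⟨1, by omega⟩ : Fin k)) (c := ⟨0, by omega⟩)
    (Fin.castLE_injective hnk)
  refine ⟨hess, hminor, arityGap_eq_of_forall hn hess fun i j hij => ?_⟩
  rw [essArity_eq_of_forall_essential hess, essArity_eq_zero_of_forall_eq (hminor i j hij),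
    Nat.sub_zero]
end

section
/- Let F = GF(q) with q a power of 2 and n ≥ 1. The F-vector space of functions f : F^n → F that are determined by oddsupp has dimension equal to |P'_n(F)|, where P'_n(F) = {S ⊆ F : |S| ∈ {n, n−2, n−4, ...}}; explicitly, the dimension is 2^{q−1} if n ≥ q, and ∑_{j ≥ 0} C(q, n−2j) if n < q. -/
/-- The space of functions `F^n → F` determined by `oddsupp`. -/
def oddsuppSpace (F : Type*) [Field F] [Fintype F] [DecidableEq F] (n : ℕ) :
    Submodule F ((Fin n → F) → F) where
  carrier := {f | ∃ fs : Set F → F, ∀ x : Fin n → F,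
    f x = fs {c : F | Odd ((Finset.univ.filter (fun i => x i = c)).card)}}
  add_mem' := by
    rintro a b ⟨fa, hfa⟩ ⟨fb, hfb⟩
    exact ⟨fa + fb, fun x => by simp [hfa x, hfb x]⟩
  zero_mem' := ⟨0, fun x => rfl⟩
  smul_mem' := by
    rintro c a ⟨fa, hfa⟩
    exact ⟨c • fa, fun x => by simp [hfa x]⟩

/-!
The map `oddsupp : F^n → Finset F` has image exactly `P'_n(F)`: `#(oddsupp x) ≡ n (mod 2)` since
`n` is the sum of the fibre sizes, and a set `S` of admissible size is hit by listing `S` once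
and padding with pairs of equal entries. The space is the range of pulling back along `oddsupp`,
which is injective on functions on the image, so its dimension is `|P'_n(F)|`. Counting: if `q ≤ n` only the parity of `|S|` matters, and toggling a
fixed element swaps the two parity classes, giving `2^(q-1)`; in general `P'_n(F)` is the disjoint
union of the layers of sizes `n - 2j`.
-/

open Finset

theorem finrank_range_funLeft (K : Type*) [Ring K] [StrongRankCondition K] {X Y : Type*}
    (φ : X → Y) [Finite (Set.range φ)] :
    Module.finrank K (LinearMap.range (LinearMap.funLeft K K φ)) = Nat.card (Set.range φ) := by
  have hval : LinearMap.range (LinearMap.funLeft K K ((↑) : Set.range φ → Y)) = ⊤ :=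
    LinearMap.range_eq_top.2 <|
      LinearMap.funLeft_surjective_of_injective _ _ _ Subtype.val_injective
  have hcomp : LinearMap.funLeft K K φ =
      (LinearMap.funLeft K K (Set.rangeFactorization φ)).comp
        (LinearMap.funLeft K K ((↑) : Set.range φ → Y)) := rfl
  have := Fintype.ofFinite (Set.range φ)
  rw [hcomp, LinearMap.range_comp_of_range_eq_top _ hval, LinearMap.finrank_range_of_inj
    (LinearMap.funLeft_injective_of_surjective _ _ _ Set.rangeFactorization_surjective),
    Module.finrank_fintype_fun_eq_card, Nat.card_eq_fintype_card]

/-- The paper's `P'_n(α)`: the subsets of `α` of size `n, n - 2, n - 4, …`. -/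
def paritySubsets (α : Type*) [Fintype α] (n : ℕ) : Finset (Finset α) :=
  {S | #S ≤ n ∧ (n - #S) % 2 = 0}

section ParitySubsets

variable {α : Type*} [Fintype α]

theorem card_filter_card_mod_two_eq [DecidableEq α] [Nonempty α] (r : ℕ) :
    #{S : Finset α | #S % 2 = r % 2} = 2 ^ (Fintype.card α - 1) := by
  obtain ⟨a⟩ := ‹Nonempty α›
  let toggle (S : Finset α) : Finset α := if a ∈ S then S.erase a else insert a S
  have toggle_toggle (S : Finset α) : toggle (toggle S) = S := by
    by_cases h : a ∈ S <;> simp [toggle, h]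
  have card_toggle_add_card (S : Finset α) : (#(toggle S) + #S) % 2 = 1 := by
    by_cases h : a ∈ S
    · simp only [toggle, if_pos h, card_erase_of_mem h]
      have := card_pos.2 ⟨a, h⟩
      omega
    · simp only [toggle, if_neg h, card_insert_of_notMem h]
      omega
  have hswap : #{S : Finset α | #S % 2 = r % 2} = #{S : Finset α | ¬#S % 2 = r % 2} :=
    card_nbij' toggle toggle
      (fun S hS => by
        simp only [coe_filter, mem_univ, true_and, Set.mem_ofPred_eq] at hS ⊢
        have := card_toggle_add_card S
        omega)
      (fun S hS => by
        simp only [coe_filter, mem_univ, true_and, Set.mem_ofPred_eq] at hS ⊢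
        have := card_toggle_add_card S
        omega)
      (fun S _ => toggle_toggle S) (fun S _ => toggle_toggle S)
  have htotal := card_filter_add_card_filter_not (s := (univ : Finset (Finset α)))
    (fun S => #S % 2 = r % 2)
  rw [card_univ, Fintype.card_finset, ← hswap,
    ← Nat.two_pow_pred_add_two_pow_pred Fintype.card_pos] at htotal
  omega

theorem card_paritySubsets_of_card_le [DecidableEq α] [Nonempty α] {n : ℕ}
    (h : Fintype.card α ≤ n) : #(paritySubsets α n) = 2 ^ (Fintype.card α - 1) := by
  rw [← card_filter_card_mod_two_eq n, paritySubsets]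
  congr 1
  refine filter_congr fun S _ => ?_
  have := S.card_le_univ
  omega

theorem card_paritySubsets [DecidableEq α] (n : ℕ) :
    #(paritySubsets α n) = ∑ j ∈ range (n / 2 + 1), (Fintype.card α).choose (n - 2 * j) := by
  have hunion : paritySubsets α n =
      (range (n / 2 + 1)).biUnion fun j => powersetCard (n - 2 * j) univ := by
    ext S
    simp only [paritySubsets, mem_filter, mem_univ, true_and, mem_biUnion, mem_range,
      mem_powersetCard, subset_univ]
    constructor
    · rintro ⟨hle, heven⟩
      exact ⟨(n - #S) / 2, by omega, by omega⟩
    · rintro ⟨j, hj, hS⟩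
      omega
  rw [hunion, card_biUnion]
  · simp [card_powersetCard]
  · intro i hi j hj hij
    refine univ.pairwise_disjoint_powersetCard ?_
    simp only [coe_range, Set.mem_Iio] at hi hj
    omega

end ParitySubsets

section OddSupp

variable {ι α : Type*} [Fintype ι] [Fintype α] [DecidableEq α]

def oddsupp (x : ι → α) : Finset α := {c | Odd #{i | x i = c}}

theorem coe_oddsupp (x : ι → α) : (oddsupp x : Set α) = {c | Odd #{i | x i = c}} :=
  coe_filter_univ _

theorem card_oddsupp_le (x : ι → α) : #(oddsupp x) ≤ Fintype.card ι := by
  refine (card_le_card fun c hc => ?_).trans (card_image_le (s := univ) (f := x))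
  obtain ⟨i, hi⟩ := card_pos.1 (mem_filter.1 hc).2.pos
  exact mem_image.2 ⟨i, mem_univ i, (mem_filter.1 hi).2⟩

theorem card_oddsupp_mod_two (x : ι → α) : #(oddsupp x) % 2 = Fintype.card ι % 2 := by
  have hfibres : Fintype.card ι = ∑ c, #{i | x i = c} :=
    card_eq_sum_card_fiberwise fun i _ => mem_univ (x i)
  rw [hfibres, sum_nat_mod, oddsupp, card_filter]
  congr 1
  refine sum_congr rfl fun c _ => ?_
  split_ifs with h
  · exact (Nat.odd_iff.1 h).symm
  · exact (Nat.even_iff.1 (Nat.not_odd_iff_even.1 h)).symm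

theorem exists_oddsupp_eq {n : ℕ} (a : α) {S : Finset α} (hle : #S ≤ n)
    (heven : (n - #S) % 2 = 0) : ∃ x : Fin n → α, oddsupp x = S := by
  let v : List.Vector α n := ⟨S.toList ++ List.replicate (n - #S) a, by
    rw [List.length_append, length_toList, List.length_replicate]; omega⟩
  refine ⟨v.get, ?_⟩
  ext c
  rw [oddsupp, mem_filter, Fin.card_filter_univ_eq_vector_get_eq_count]
  have hpadding : Even (n - #S) := Nat.even_iff.2 heven
  simp only [v, List.Vector.toList_mk, List.count_append, S.nodup_toList.count, mem_toList,
    List.count_replicate]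
  split_ifs <;> simp_all

theorem range_oddsupp [Nonempty α] (n : ℕ) :
    Set.range (oddsupp : (Fin n → α) → Finset α) = paritySubsets α n := by
  ext S
  simp only [paritySubsets, coe_filter, mem_univ, true_and, Set.mem_ofPred_eq, Set.mem_range]
  constructor
  · rintro ⟨x, rfl⟩
    have := card_oddsupp_le x
    have := card_oddsupp_mod_two x
    rw [Fintype.card_fin] at *
    omega
  · rintro ⟨hle, heven⟩
    exact exists_oddsupp_eq (Classical.arbitrary α) hle heven

end OddSupp

theorem oddsuppSpace_eq_range_funLeft (F : Type*) [Field F] [Fintype F] [DecidableEq F]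
    (n : ℕ) : oddsuppSpace F n =
      LinearMap.range (LinearMap.funLeft F F fun x : Fin n → F => (oddsupp x : Set F)) := by
  ext f
  simp only [LinearMap.mem_range, funext_iff, LinearMap.funLeft_apply, eq_comm (b := f _),
    coe_oddsupp]
  rfl

theorem finrank_oddsuppSpace_general
    (F : Type*) [Field F] [Fintype F] [DecidableEq F] (q n : ℕ)
    (hq : Fintype.card F = q) :
    Module.finrank F (oddsuppSpace F n) =
      Fintype.card {S : Finset F // S.card ≤ n ∧ (n - S.card) % 2 = 0} ∧
    Module.finrank F (oddsuppSpace F n) =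
      (if q ≤ n then 2 ^ (q - 1)
       else ∑ j ∈ Finset.range (n / 2 + 1), q.choose (n - 2 * j)) := by
  have hrank : Module.finrank F (oddsuppSpace F n) = #(paritySubsets F n) := by
    rw [oddsuppSpace_eq_range_funLeft, finrank_range_funLeft, Set.range_comp',
      Nat.card_image_of_injective coe_injective, range_oddsupp, Nat.card_coe_set_eq,
      Set.ncard_coe_finset]
  refine ⟨hrank.trans (Fintype.card_subtype _).symm, hrank.trans ?_⟩
  subst hq
  split_ifs with h
  · exact card_paritySubsets_of_card_le h
  · exact card_paritySubsets n

/-- For `F = GF(q)` (`q` a power of `2`) and `n ≥ 1`, the dimension of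
the space of functions `F^n → F` determined by `oddsupp` equals `|P'_n(F)|`, the number
of subsets of `F` whose cardinality lies in `{n, n − 2, n − 4, …}`; explicitly it is
`2^{q−1}` if `n ≥ q` and `∑_j C(q, n − 2j)` if `n < q`. -/
theorem finrank_oddsuppSpace
    (F : Type*) [Field F] [Fintype F] [DecidableEq F] (q n : ℕ)
    (hq : Fintype.card F = q) (hq2 : ∃ k : ℕ, 0 < k ∧ q = 2 ^ k) (hn : 1 ≤ n) :
    Module.finrank F (oddsuppSpace F n) =
      Fintype.card {S : Finset F // S.card ≤ n ∧ (n - S.card) % 2 = 0} ∧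
    Module.finrank F (oddsuppSpace F n) =
      (if q ≤ n then 2 ^ (q - 1)
       else ∑ j ∈ Finset.range (n / 2 + 1), q.choose (n - 2 * j)) :=
  finrank_oddsuppSpace_general F q n hq
end
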